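/- arXiv:2203.03766 — 2 statements merged into one kernel-verified Lean document; each statement's English description precedes it below -/
import Mathlib

section
/- For every θ ∈ (0,1) there exist constants C = C(θ) > 0 and δ₀ = δ₀(θ) > 0 with the following property: if 0 < δ ≤ δ₀ and (I, ψ, m) satisfy the centering condition m((-∞, a_θ] ∩ I) = θ and the δ-deficit condition e^{-ψ(a_θ)} ≤ e^{-ψ_g(a_θ)} + δ, then for every x ∈ I, ψ(x) − ψ_g(x) ≥ (ψ'_+(a_θ) − a_θ)(x − a_θ) − C·δ, where ψ'_+(a_θ) denotes the right derivative of the convex function ψ at a_θ. -/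
/-! Since `ψ - x²/2` is convex, `ψ(x) ≥ ψ(a) + ψ'_+(a)(x - a) + (x - a)²/2`, and for `ψ_g` this
is an equality with slope `a`. Subtracting gives
`ψ - ψ_g ≥ (ψ'_+(a) - a)(x - a) + (ψ(a) - ψ_g(a))`, and the deficit condition bounds the last
term below by `-e^{ψ_g(a)} δ`. As `a = a_θ` is determined by `θ`, so is `C = e^{ψ_g(a_θ)}`. -/

open MeasureTheory Real Set

/-- `gaussPsi x = x²/2 + (1/2)·log(2π)`, so that the standard Gaussian measure
is `exp (-gaussPsi x) dx`. -/
noncomputable def gaussPsi (x : ℝ) : ℝ := x ^ 2 / 2 + Real.log (2 * π) / 2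

/-- The standard Gaussian measure `γ(dx) = (2π)^{-1/2} exp(-x²/2) dx` on `ℝ`. -/
noncomputable def gauss : Measure ℝ :=
  MeasureTheory.volume.withDensity fun x => ENNReal.ofReal (Real.exp (-gaussPsi x))

lemma withDensity_Iic_lt_Iic {f : ℝ → ENNReal} (hf : Measurable f) (hf0 : ∀ x, f x ≠ 0)
    {a b : ℝ} (hab : a < b) (ha : volume.withDensity f (Iic a) ≠ ⊤) :
    volume.withDensity f (Iic a) < volume.withDensity f (Iic b) := by
  have hIoc : volume.withDensity f (Ioc a b) ≠ 0 := by
    rw [Ne, withDensity_apply_eq_zero hf, show {x | f x ≠ 0} = univ from eq_univ_of_forall hf0,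
      univ_inter, Real.volume_Ioc, ENNReal.ofReal_eq_zero, not_le]
    exact sub_pos.mpr hab
  calc volume.withDensity f (Iic a)
      < volume.withDensity f (Iic a) + volume.withDensity f (Ioc a b) :=
        ENNReal.lt_add_right ha hIoc
    _ = volume.withDensity f (Iic b) := by
        rw [← measure_union (Iic_disjoint_Ioc le_rfl) measurableSet_Ioc,
          Iic_union_Ioc_eq_Iic hab.le]

lemma eq_of_withDensity_Iic_eq {f : ℝ → ENNReal} (hf : Measurable f) (hf0 : ∀ x, f x ≠ 0)
    {a b : ℝ} (h : volume.withDensity f (Iic a) = volume.withDensity f (Iic b))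
    (ha : volume.withDensity f (Iic a) ≠ ⊤) : a = b := by
  rcases lt_trichotomy a b with hab | rfl | hab
  · exact absurd h (withDensity_Iic_lt_Iic hf hf0 hab ha).ne
  · rfl
  · exact absurd h (withDensity_Iic_lt_Iic hf hf0 hab (h ▸ ha)).ne'

lemma eq_of_gauss_Iic_eq {θ a b : ℝ} (ha : gauss (Iic a) = ENNReal.ofReal θ)
    (hb : gauss (Iic b) = ENNReal.ofReal θ) : a = b :=
  eq_of_withDensity_Iic_eq (by unfold gaussPsi; fun_prop)
    (fun _ => (ENNReal.ofReal_pos.mpr (exp_pos _)).ne') (ha.trans hb.symm)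
    (ha ▸ ENNReal.ofReal_ne_top)

lemma strongConvexOn_of_forall_mem_Ioo {E : Type*} [NormedAddCommGroup E] [NormedSpace ℝ E]
    {s : Set E} {m : ℝ} {f : E → ℝ} (hs : Convex ℝ s)
    (hf : ∀ x ∈ s, ∀ y ∈ s, ∀ t ∈ Ioo (0 : ℝ) 1,
      f ((1 - t) • x + t • y) ≤ (1 - t) * f x + t * f y - m / 2 * (1 - t) * t * ‖x - y‖ ^ 2) :
    StrongConvexOn s m f := by
  refine ⟨hs, fun x hx y hy a b ha hb hab => ?_⟩
  obtain rfl : a = 1 - b := by linarith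
  rcases hb.eq_or_lt with rfl | hb
  · simp
  rcases ha.eq_or_lt with ha | ha
  · obtain rfl : b = 1 := by linarith
    simp
  have := hf x hx y hy b ⟨hb, by linarith⟩
  simp only [smul_eq_mul]
  linarith

lemma ConvexOn.add_rightDeriv_mul_sub_le {S : Set ℝ} {f : ℝ → ℝ} {x y : ℝ}
    (hf : ConvexOn ℝ S f) (hx : x ∈ interior S) (hy : y ∈ S) :
    f x + derivWithin f (Ioi x) x * (y - x) ≤ f y := by
  rcases lt_trichotomy x y with hxy | rfl | hxy
  · have := hf.rightDeriv_le_slope_of_mem_interior hx hy hxy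
    rw [slope_def_field, le_div_iff₀ (sub_pos.mpr hxy)] at this
    linarith
  · simp
  · have := (hf.slope_le_leftDeriv_of_mem_interior hy hx hxy).trans
      (hf.leftDeriv_le_rightDeriv_of_mem_interior hx)
    rw [slope_def_field, div_le_iff₀ (sub_pos.mpr hxy)] at this
    linarith

lemma StrongConvexOn.add_rightDeriv_mul_sub_add_sq_le {S : Set ℝ} {m : ℝ} {f : ℝ → ℝ} {x y : ℝ}
    (hf : StrongConvexOn S m f) (hx : x ∈ interior S) (hy : y ∈ S) :
    f x + derivWithin f (Ioi x) x * (y - x) + m / 2 * (y - x) ^ 2 ≤ f y := by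
  set g : ℝ → ℝ := fun z => f z - m / 2 * z ^ 2
  have hg : ConvexOn ℝ S g := by
    simpa only [Real.norm_eq_abs, sq_abs] using strongConvexOn_iff_convex.mp hf
  have hq : HasDerivWithinAt (fun z : ℝ => m / 2 * z ^ 2) (m * x) (Ioi x) x :=
    ((hasDerivAt_pow 2 x).const_mul (m / 2)).hasDerivWithinAt.congr_deriv (by ring)
  have hderiv : derivWithin f (Ioi x) x = derivWithin g (Ioi x) x + m * x := by
    have hfg : g + (fun z : ℝ => m / 2 * z ^ 2) = f := by ext; simp [g]
    have := (hg.hasDerivWithinAt_rightDeriv_of_mem_interior hx).add hq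
    rw [hfg] at this
    exact this.derivWithin (uniqueDiffWithinAt_Ioi x)
  have := hg.add_rightDeriv_mul_sub_le hx hy
  rw [hderiv]
  simp only [g] at this ⊢
  linarith

lemma neg_exp_mul_le_sub_of_exp_neg_le {u v δ : ℝ} (h : exp (-u) ≤ exp (-v) + δ) :
    -(exp v * δ) ≤ u - v := by
  have hscaled : exp (v - u) ≤ 1 + exp v * δ := by
    calc exp (v - u) = exp v * exp (-u) := by rw [sub_eq_add_neg, exp_add]
      _ ≤ exp v * (exp (-v) + δ) := by gcongr
      _ = 1 + exp v * δ := by rw [mul_add, ← exp_add, add_neg_cancel, exp_zero]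
  have : v - u ≤ exp v * δ :=
    exp_le_exp.mp (by linarith [add_one_le_exp (exp v * δ)])
  linarith

theorem lower_bound_on_interval_general (θ : ℝ) :
    ∃ C : ℝ, 0 < C ∧ ∃ δ₀ : ℝ, 0 < δ₀ ∧
      ∀ (δ : ℝ), 0 < δ → δ ≤ δ₀ →
      ∀ (I : Set ℝ) (ψ : ℝ → ℝ) (a : ℝ),
        IsOpen I → Convex ℝ I → a ∈ I →
        gauss (Iic a) = ENNReal.ofReal θ →
        (∀ x ∈ I, ∀ y ∈ I, ∀ t ∈ Ioo (0:ℝ) 1,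
          ψ ((1 - t) * x + t * y)
            ≤ (1 - t) * ψ x + t * ψ y - (1 / 2) * (1 - t) * t * |x - y| ^ 2) →
        IsProbabilityMeasure
          (MeasureTheory.volume.withDensity
            (I.indicator fun x => ENNReal.ofReal (Real.exp (-ψ x)))) →
        (MeasureTheory.volume.withDensity
            (I.indicator fun x => ENNReal.ofReal (Real.exp (-ψ x)))) (Iic a ∩ I)
          = ENNReal.ofReal θ →
        Real.exp (-ψ a) ≤ Real.exp (-gaussPsi a) + δ →
        ∀ x ∈ I,
          ψ x - gaussPsi x ≥ (derivWithin ψ (Ici a) a - a) * (x - a) - C * δ := by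
  obtain ⟨a₀, ha₀⟩ | hθ := em (∃ a₀, gauss (Iic a₀) = ENNReal.ofReal θ)
  swap
  · exact ⟨1, one_pos, 1, one_pos, fun _ _ _ _ _ a _ _ _ ha => absurd ⟨a, ha⟩ hθ⟩
  refine ⟨exp (gaussPsi a₀), exp_pos _, 1, one_pos, ?_⟩
  intro δ _ _ I ψ a hI hIconv haI ha hψ _ _ hdeficit x hx
  obtain rfl := eq_of_gauss_Iic_eq ha ha₀
  have hstrong : StrongConvexOn I 1 ψ := strongConvexOn_of_forall_mem_Ioo hIconv hψ
  have htangent := hstrong.add_rightDeriv_mul_sub_add_sq_le (hI.interior_eq.symm ▸ haI) hx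
  have hvalue := neg_exp_mul_le_sub_of_exp_neg_le hdeficit
  have hgauss : gaussPsi x = gaussPsi a + a * (x - a) + (x - a) ^ 2 / 2 := by
    unfold gaussPsi; ring
  rw [← derivWithin_Ioi_eq_Ici]
  linear_combination htangent + hvalue + hgauss

/-- the lower bound `ψ - ψ_g ≥ (ψ'_+(a_θ) - a_θ)(x - a_θ) - C·δ` on `I`. -/
theorem lower_bound_on_interval (θ : ℝ) (hθ : θ ∈ Ioo (0:ℝ) 1) :
    ∃ C : ℝ, 0 < C ∧ ∃ δ₀ : ℝ, 0 < δ₀ ∧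
      ∀ (δ : ℝ), 0 < δ → δ ≤ δ₀ →
      ∀ (I : Set ℝ) (ψ : ℝ → ℝ) (a : ℝ),
        IsOpen I → Convex ℝ I → a ∈ I →
        gauss (Iic a) = ENNReal.ofReal θ →
        (∀ x ∈ I, ∀ y ∈ I, ∀ t ∈ Ioo (0:ℝ) 1,
          ψ ((1 - t) * x + t * y)
            ≤ (1 - t) * ψ x + t * ψ y - (1 / 2) * (1 - t) * t * |x - y| ^ 2) →
        IsProbabilityMeasure
          (MeasureTheory.volume.withDensity
            (I.indicator fun x => ENNReal.ofReal (Real.exp (-ψ x)))) →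
        (MeasureTheory.volume.withDensity
            (I.indicator fun x => ENNReal.ofReal (Real.exp (-ψ x)))) (Iic a ∩ I)
          = ENNReal.ofReal θ →
        Real.exp (-ψ a) ≤ Real.exp (-gaussPsi a) + δ →
        ∀ x ∈ I,
          ψ x - gaussPsi x ≥ (derivWithin ψ (Ici a) a - a) * (x - a) - C * δ :=
  lower_bound_on_interval_general θ
end

section
/- For every θ ∈ (0,1) there exist constants C = C(θ) > 0 and δ₀ = δ₀(θ) > 0 with the following property: if 0 < δ ≤ δ₀ and (I, ψ, m) satisfy the centering condition m((-∞, a_θ] ∩ I) = θ and the δ-deficit condition e^{-ψ(a_θ)} ≤ e^{-ψ_g(a_θ)} + δ, then with f(x) = e^{ψ_g(x) − ψ(x)} for x ∈ I and f(x) = 0 for x ∉ I, one has ∫_ℝ |x − a_θ| · |f(x) − 1| γ(dx) ≤ C·√δ. -/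
/-!
Write `g = gaussPsi - ψ`, concave on `I` because `ψ` is `1`-convex, so that `f = exp g` on `I`.
The deficit condition says `f a ≤ 1 + O(δ)`. Superlevel sets of `f` are intervals, hence
`f ≤ 1 + O(δ)` on one side of `a`. The centering condition says `∫ f dγ = γ` on each
half-line, so on that side `f` is `O(δ)`-close to `1` in `L¹(γ)`, and there is a point `x₀`
with `|x₀ - a| ≥ 1` and `f x₀ ≥ 1 - O(δ)`. Concavity of `g` along `x₀, a, x` then gives
`f x ≤ 1 + O(δ) e^{|x - a|}` on the other side as well. With this bound everywhere, centering
again bounds the mass of `(1 - f)₊` on each half-line by that of `(f - 1)₊ = O(δ)`, and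
`|x - a| (1 - f)₊ ≤ (√δ |x - a|² + (1 - f)₊ / √δ) / 2` produces the factor `√δ`.
The constants may depend on `a = a_θ`, which `θ` determines.
-/

open MeasureTheory Real Set

open ProbabilityTheory
open scoped ENNReal
open ENNReal (ofReal)

theorem gauss_eq_gaussianReal : gauss = gaussianReal 0 1 := by
  rw [gaussianReal_of_var_ne_zero _ one_ne_zero, gauss]
  congr 1
  funext x
  rw [gaussianPDF, gaussianPDFReal_def, gaussPsi, neg_add, exp_add, NNReal.coe_one, mul_one,
    ← log_sqrt (by positivity), exp_neg (log _), exp_log (by positivity), mul_comm]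
  simp only [sub_zero, mul_one, neg_div]

instance : IsProbabilityMeasure gauss := gauss_eq_gaussianReal ▸ inferInstance

theorem gauss_ne_zero_of_volume_ne_zero {s : Set ℝ} (hs : volume s ≠ 0) : gauss s ≠ 0 := by
  rw [gauss_eq_gaussianReal]
  exact fun h => hs (gaussianReal_absolutelyContinuous' 0 one_ne_zero h)

theorem strictMono_gauss_Iic : StrictMono fun a => gauss (Iic a) := by
  intro a b hab
  simp only
  rw [← Iic_union_Ioc_eq_Iic hab.le, measure_union (Iic_disjoint_Ioc le_rfl) measurableSet_Ioc]
  exact ENNReal.lt_add_right (measure_ne_top _ _)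
    (gauss_ne_zero_of_volume_ne_zero (by simp [hab]))

theorem integrable_exp_two_mul_abs_sub (a : ℝ) :
    Integrable (fun x => exp (2 * |x - a|)) gauss := by
  have hexp (t : ℝ) : Integrable (fun x => exp (t * x)) gauss :=
    gauss_eq_gaussianReal ▸ integrable_exp_mul_gaussianReal t
  refine (((hexp 2).const_mul (exp (-2 * a))).add ((hexp (-2)).const_mul (exp (2 * a)))).mono'
    (by fun_prop) (ae_of_all _ fun x => ?_)
  simp only [Pi.add_apply, norm_of_nonneg (exp_pos _).le, ← exp_add]
  rcases abs_cases (x - a) with ⟨h, _⟩ | ⟨h, _⟩ <;> rw [h]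
  · exact le_add_of_le_of_nonneg (exp_le_exp.2 (by linarith)) (exp_pos _).le
  · exact le_add_of_nonneg_of_le (exp_pos _).le (exp_le_exp.2 (by linarith))

theorem one_le_lintegral_exp_two_mul_abs_sub (a : ℝ) :
    1 ≤ ∫⁻ x, ofReal (exp (2 * |x - a|)) ∂gauss :=
  calc 1 = ∫⁻ _, 1 ∂gauss := by simp
    _ ≤ ∫⁻ x, ofReal (exp (2 * |x - a|)) ∂gauss := lintegral_mono fun x =>
        ENNReal.one_le_ofReal.2 (one_le_exp (by positivity))

theorem exists_pos_ofReal_le_gauss_Iic_and_Ici (a : ℝ) :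
    ∃ d > 0, ofReal d ≤ gauss (Iic (a - 1)) ∧ ofReal d ≤ gauss (Ici (a + 1)) :=
  ⟨min (gauss (Iic (a - 1))).toReal (gauss (Ici (a + 1))).toReal,
    lt_min (ENNReal.toReal_pos (gauss_ne_zero_of_volume_ne_zero (by simp)) (measure_ne_top _ _))
      (ENNReal.toReal_pos (gauss_ne_zero_of_volume_ne_zero (by simp)) (measure_ne_top _ _)),
    ENNReal.ofReal_le_of_le_toReal (min_le_left _ _),
    ENNReal.ofReal_le_of_le_toReal (min_le_right _ _)⟩

@[fun_prop]
theorem continuous_gaussPsi : Continuous gaussPsi := by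
  unfold gaussPsi
  fun_prop

theorem exp_mul_sub_one_le {s M : ℝ} (hs0 : 0 ≤ s) (hs1 : s ≤ 1) :
    exp (s * M) - 1 ≤ s * (exp M - 1) := by
  have h := convexOn_exp.2 (mem_univ 0) (mem_univ M) (sub_nonneg.2 hs1) hs0 (by ring)
  simp only [smul_eq_mul, mul_zero, zero_add, exp_zero, mul_one] at h
  linarith

theorem exp_neg_two_mul_le_one_sub {κ : ℝ} (h0 : 0 ≤ κ) (h1 : κ ≤ 1 / 2) :
    exp (-(2 * κ)) ≤ 1 - κ := by
  have e1 : 2 * κ + 1 ≤ exp (2 * κ) := add_one_le_exp _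
  have e2 : exp (-(2 * κ)) * exp (2 * κ) = 1 := by rw [← exp_add]; simp
  nlinarith [mul_le_mul_of_nonneg_left e1 (exp_pos (-(2 * κ))).le,
    mul_nonneg h0 (by linarith : (0:ℝ) ≤ 1 - 2 * κ)]

theorem mul_abs_sub_one_le {t u c : ℝ} (ht : 0 ≤ t) (hu : 0 ≤ u) (hc : 0 < c)
    (hu1 : u ≤ 1 + c * exp t) :
    t * |u - 1| ≤ (c + √c / 2) * exp (2 * t) + 1 / (2 * √c) * max (1 - u) 0 := by
  have hte : t ≤ exp t := by linarith [add_one_le_exp t]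
  have he2 : exp (2 * t) = exp t * exp t := by rw [← exp_add]; ring_nf
  rcases le_total u 1 with h | h
  · rw [abs_of_nonpos (by linarith), max_eq_left (by linarith)]
    -- AM-GM: `2 √c t w ≤ c t² + w² ≤ c t² + w` for `w = 1 - u ∈ [0, 1]`
    have hamgm : t * (1 - u) ≤ √c / 2 * t ^ 2 + 1 / (2 * √c) * (1 - u) := by
      refine le_of_mul_le_mul_left ?_ (by positivity : 0 < 2 * √c)
      have hexp :
          2 * √c * (√c / 2 * t ^ 2 + 1 / (2 * √c) * (1 - u)) = c * t ^ 2 + (1 - u) := by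
        field_simp
        rw [sq_sqrt hc.le]
        ring
      rw [hexp]
      nlinarith [sq_nonneg (√c * t - (1 - u)), sq_sqrt hc.le]
    have ht2 : t ^ 2 ≤ exp (2 * t) := by rw [he2, sq]; exact mul_self_le_mul_self ht hte
    nlinarith [mul_le_mul_of_nonneg_left ht2 (by positivity : 0 ≤ √c / 2)]
  · rw [abs_of_nonneg (by linarith), max_eq_right (by linarith), mul_zero, add_zero]
    have := mul_le_mul hte (show u - 1 ≤ c * exp t by linarith) (by linarith) (exp_pos t).le
    nlinarith [mul_nonneg (by positivity : 0 ≤ √c / 2) (exp_pos (2 * t)).le]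

theorem forall_le_or_forall_le_of_min_le {α β : Type*} [Preorder α] [LinearOrder β]
    {F : α → β} {a : α} {r : β}
    (hF : ∀ x y, x ≤ a → a ≤ y → min (F x) (F y) ≤ F a) (ha : F a ≤ r) :
    (∀ x ≤ a, F x ≤ r) ∨ (∀ y, a ≤ y → F y ≤ r) := by
  by_contra! h
  obtain ⟨⟨x, hx, hFx⟩, ⟨y, hy, hFy⟩⟩ := h
  exact (lt_min hFx hFy).not_ge ((hF x y hx hy).trans ha)

theorem strongConvexOn_of_forall_mem_Ioo_s5 {I : Set ℝ} {ψ : ℝ → ℝ} (hI : Convex ℝ I)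
    (hψ : ∀ x ∈ I, ∀ y ∈ I, ∀ t ∈ Ioo (0:ℝ) 1,
      ψ ((1 - t) * x + t * y) ≤ (1 - t) * ψ x + t * ψ y - (1 / 2) * (1 - t) * t * |x - y| ^ 2) :
    StrongConvexOn I 1 ψ := by
  refine ⟨hI, fun x hx y hy s t hs ht hst => ?_⟩
  simp only [smul_eq_mul, Real.norm_eq_abs]
  obtain rfl | hs0 := hs.eq_or_lt
  · obtain rfl : t = 1 := by linarith
    simp
  obtain rfl | ht0 := ht.eq_or_lt
  · obtain rfl : s = 1 := by linarith
    simp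
  obtain rfl : s = 1 - t := by linarith
  linear_combination hψ x hx y hy t ⟨ht0, by linarith⟩

theorem concaveOn_gaussPsi_sub {I : Set ℝ} {ψ : ℝ → ℝ} (hψ : StrongConvexOn I 1 ψ) :
    ConcaveOn ℝ I fun x => gaussPsi x - ψ x := by
  refine ((strongConvexOn_iff_convex.1 hψ).neg.add_const (log (2 * π) / 2)).congr fun x _ => ?_
  simp only [gaussPsi, Pi.add_apply, Pi.neg_apply, Real.norm_eq_abs, sq_abs]
  ring

section ConcaveProfile

variable {I : Set ℝ} {g : ℝ → ℝ}

theorem ConcaveOn.abs_sub_mul_sub_le (hg : ConcaveOn ℝ I g)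
    {x₀ x a : ℝ} (hx₀ : x₀ ∈ I) (hx : x ∈ I) (ha : a ∈ segment ℝ x₀ x) :
    |a - x₀| * (g x - g a) ≤ |x - a| * (g a - g x₀) := by
  obtain ⟨s, t, hs, ht, hst, rfl⟩ := ha
  have hconc := hg.2 hx₀ hx hs ht hst
  simp only [smul_eq_mul] at hconc ⊢
  obtain rfl : s = 1 - t := by linarith
  rw [show (1 - t) * x₀ + t * x - x₀ = t * (x - x₀) by ring,
    show x - ((1 - t) * x₀ + t * x) = (1 - t) * (x - x₀) by ring,
    abs_mul, abs_mul, abs_of_nonneg hs, abs_of_nonneg ht]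
  nlinarith [mul_nonneg (abs_nonneg (x - x₀)) (sub_nonneg.2 hconc)]

theorem ConcaveOn.le_add_mul_abs_sub (hg : ConcaveOn ℝ I g)
    {x₀ x a η : ℝ} (hx₀ : x₀ ∈ I) (hx : x ∈ I) (ha : a ∈ segment ℝ x₀ x)
    (hdist : 1 ≤ |a - x₀|) (hη : 0 ≤ η) (hga : g a ≤ η) (hgx₀ : -η ≤ g x₀) :
    g x ≤ η + 2 * η * |x - a| := by
  have hsec := hg.abs_sub_mul_sub_le hx₀ hx ha
  rcases le_total (g x) (g a) with h | h
  · nlinarith [abs_nonneg (x - a)]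
  · nlinarith [abs_nonneg (x - a), mul_le_mul_of_nonneg_right hdist (sub_nonneg.2 h)]

theorem ConcaveOn.indicator_exp_le_of_mem_segment (hg : ConcaveOn ℝ I g) {x₀ x a η : ℝ}
    (hx₀ : x₀ ∈ I) (ha : a ∈ segment ℝ x₀ x) (hdist : 1 ≤ |a - x₀|) (hη : 0 ≤ η)
    (hη1 : 2 * η ≤ 1) (hga : g a ≤ η) (hgx₀ : -η ≤ g x₀) :
    I.indicator (fun y => exp (g y)) x ≤ 1 + 2 * exp 1 * η * exp |x - a| := by
  by_cases hx : x ∈ I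
  swap
  · rw [indicator_of_notMem hx]
    positivity
  rw [indicator_of_mem hx]
  have hgx := hg.le_add_mul_abs_sub hx₀ hx ha hdist hη hga hgx₀
  calc exp (g x) ≤ exp (2 * η * (1 + |x - a|)) := exp_le_exp.2 (by linarith)
    _ ≤ 1 + 2 * η * (exp (1 + |x - a|) - 1) := by
      linarith [exp_mul_sub_one_le (M := 1 + |x - a|) (by linarith) hη1]
    _ ≤ 1 + 2 * exp 1 * η * exp |x - a| := by
      rw [exp_add]
      nlinarith

theorem ConcaveOn.min_le_indicator_exp (hg : ConcaveOn ℝ I g)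
    {x y z : ℝ} (hz : z ∈ segment ℝ x y) :
    min (I.indicator (fun y => exp (g y)) x) (I.indicator (fun y => exp (g y)) y)
      ≤ I.indicator (fun y => exp (g y)) z := by
  have hnonneg : 0 ≤ I.indicator (fun y => exp (g y)) z :=
    indicator_nonneg (fun _ _ => (exp_pos _).le) z
  by_cases hx : x ∈ I
  swap
  · exact (min_le_left _ _).trans (by rwa [indicator_of_notMem hx])
  by_cases hy : y ∈ I
  swap
  · exact (min_le_right _ _).trans (by rwa [indicator_of_notMem hy])
  rw [indicator_of_mem hx, indicator_of_mem hy,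
    indicator_of_mem (hg.1.segment_subset hx hy hz), ← exp_monotone.map_min]
  exact exp_le_exp.2 (hg.ge_on_segment hx hy hz)

theorem ConcaveOn.measurable_indicator_exp (hg : ConcaveOn ℝ I g)
    (hI : IsOpen I) : Measurable (I.indicator fun y => exp (g y)) := by
  classical
  rw [← piecewise_eq_indicator]
  exact (continuous_exp.comp_continuousOn (hg.continuousOn hI)).measurable_piecewise
    continuousOn_const hI.measurableSet

end ConcaveProfile

section Balance

variable {α : Type*} [MeasurableSpace α] {μ : Measure α} {S : Set α} {F : α → ℝ}

theorem setLIntegral_ofReal_one_sub_eq (hSfin : μ S ≠ ∞)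
    (hF : Measurable F) (hF0 : ∀ x, 0 ≤ F x) (hbal : ∫⁻ x in S, ofReal (F x) ∂μ = μ S) :
    ∫⁻ x in S, ofReal (1 - F x) ∂μ = ∫⁻ x in S, ofReal (F x - 1) ∂μ := by
  have hpt (x : α) : ofReal (F x) + ofReal (1 - F x) = ofReal (F x - 1) + 1 := by
    rcases le_total (F x) 1 with h | h
    · rw [ENNReal.ofReal_of_nonpos (sub_nonpos.2 h), zero_add,
        ← ENNReal.ofReal_add (hF0 x) (sub_nonneg.2 h)]
      simp
    · rw [ENNReal.ofReal_of_nonpos (sub_nonpos.2 h), add_zero, ← ENNReal.ofReal_one,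
        ← ENNReal.ofReal_add (sub_nonneg.2 h) zero_le_one]
      simp
  have h := lintegral_congr (μ := μ.restrict S) hpt
  rw [lintegral_add_left hF.ennreal_ofReal, lintegral_add_right _ measurable_const, hbal,
    setLIntegral_one, add_comm _ (μ S)] at h
  exact (ENNReal.add_right_inj hSfin).1 h

theorem exists_mem_lt_of_setLIntegral_lt {J : Set α} (hJ : MeasurableSet J) {u : α → ℝ≥0∞}
    {κ : ℝ≥0∞} (h : ∫⁻ x in J, u x ∂μ < κ * μ J) : ∃ x ∈ J, u x < κ := by
  by_contra! hu
  exact h.not_ge ((setLIntegral_const J κ).symm.trans_le (setLIntegral_mono' hJ hu))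

theorem exists_mem_one_sub_lt_of_setLIntegral_eq [IsProbabilityMeasure μ] {H J : Set α}
    {δ κ : ℝ} (hF : Measurable F) (hF0 : ∀ x, 0 ≤ F x) (hH : MeasurableSet H) (hJH : J ⊆ H)
    (hJ : MeasurableSet J) (hbal : ∫⁻ x in H, ofReal (F x) ∂μ = μ H)
    (hFH : ∀ x ∈ H, F x ≤ 1 + δ) (hgap : ofReal δ < ofReal κ * μ J) :
    ∃ x₀ ∈ J, 1 - κ < F x₀ := by
  have hdeficit : ∫⁻ x in J, ofReal (1 - F x) ∂μ < ofReal κ * μ J :=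
    calc ∫⁻ x in J, ofReal (1 - F x) ∂μ ≤ ∫⁻ x in H, ofReal (1 - F x) ∂μ :=
          lintegral_mono_set hJH
      _ = ∫⁻ x in H, ofReal (F x - 1) ∂μ :=
          setLIntegral_ofReal_one_sub_eq (measure_ne_top _ _) hF hF0 hbal
      _ ≤ ∫⁻ _ in H, ofReal δ ∂μ :=
          setLIntegral_mono' hH fun x hx => ENNReal.ofReal_le_ofReal (by linarith [hFH x hx])
      _ = ofReal δ * μ H := setLIntegral_const _ _
      _ ≤ ofReal δ := mul_le_of_le_one_right' prob_le_one
      _ < ofReal κ * μ J := hgap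
  obtain ⟨x₀, hx₀J, hx₀⟩ := exists_mem_lt_of_setLIntegral_lt hJ hdeficit
  exact ⟨x₀, hx₀J, by linarith [((ENNReal.ofReal_lt_ofReal_iff').1 hx₀).1]⟩

end Balance

section WeightedEstimate

variable {μ : Measure ℝ} {F : ℝ → ℝ} {a c : ℝ}

theorem setLIntegral_abs_sub_mul_abs_sub_one_le {S : Set ℝ} (hS : MeasurableSet S)
    (hSfin : μ S ≠ ∞) (hF : Measurable F) (hF0 : ∀ x, 0 ≤ F x) (hc : 0 < c)
    (hbd : ∀ x, F x ≤ 1 + c * exp |x - a|) (hbal : ∫⁻ x in S, ofReal (F x) ∂μ = μ S) :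
    ∫⁻ x in S, ofReal (|x - a| * |F x - 1|) ∂μ
      ≤ ofReal (c + √c) * ∫⁻ x, ofReal (exp (2 * |x - a|)) ∂μ := by
  set M := ∫⁻ x, ofReal (exp (2 * |x - a|)) ∂μ
  have hw : Measurable fun x => ofReal (exp (2 * |x - a|)) := by fun_prop
  have hexcess : ∫⁻ x in S, ofReal (F x - 1) ∂μ ≤ ofReal c * M := by
    calc ∫⁻ x in S, ofReal (F x - 1) ∂μ
        ≤ ∫⁻ x in S, ofReal c * ofReal (exp (2 * |x - a|)) ∂μ := by
          refine setLIntegral_mono' hS fun x _ => ?_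
          rw [← ENNReal.ofReal_mul hc.le]
          gcongr
          have := exp_le_exp.2 (by linarith [abs_nonneg (x - a)] : |x - a| ≤ 2 * |x - a|)
          nlinarith [hbd x]
      _ ≤ ofReal c * M := by
          rw [lintegral_const_mul _ hw]
          gcongr
          exact setLIntegral_le_lintegral _ _
  have hpt : ∀ x ∈ S, ofReal (|x - a| * |F x - 1|) ≤ ofReal (c + √c / 2)
      * ofReal (exp (2 * |x - a|)) + ofReal (1 / (2 * √c)) * ofReal (1 - F x) := by
    intro x _
    calc ofReal (|x - a| * |F x - 1|)
        ≤ ofReal ((c + √c / 2) * exp (2 * |x - a|) + 1 / (2 * √c) * max (1 - F x) 0) :=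
          ENNReal.ofReal_le_ofReal (mul_abs_sub_one_le (abs_nonneg _) (hF0 x) hc (hbd x))
      _ ≤ _ := ENNReal.ofReal_add_le
      _ = _ := by
          rw [ENNReal.ofReal_mul (by positivity), ENNReal.ofReal_mul (by positivity),
            ENNReal.ofReal_max, ENNReal.ofReal_zero, max_zero]
  calc ∫⁻ x in S, ofReal (|x - a| * |F x - 1|) ∂μ
      ≤ ∫⁻ x in S, (ofReal (c + √c / 2) * ofReal (exp (2 * |x - a|))
          + ofReal (1 / (2 * √c)) * ofReal (1 - F x)) ∂μ := setLIntegral_mono' hS hpt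
    _ = ofReal (c + √c / 2) * ∫⁻ x in S, ofReal (exp (2 * |x - a|)) ∂μ
          + ofReal (1 / (2 * √c)) * ∫⁻ x in S, ofReal (F x - 1) ∂μ := by
        rw [lintegral_add_left (hw.const_mul _), lintegral_const_mul _ hw,
          lintegral_const_mul _ (by fun_prop),
          setLIntegral_ofReal_one_sub_eq hSfin hF hF0 hbal]
    _ ≤ ofReal (c + √c / 2) * M + ofReal (1 / (2 * √c)) * (ofReal c * M) := by
        gcongr
        exact setLIntegral_le_lintegral _ _
    _ = ofReal (c + √c) * M := by
        rw [← mul_assoc, ← add_mul, ← ENNReal.ofReal_mul (by positivity),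
          ← ENNReal.ofReal_add (by positivity) (by positivity)]
        congr 2
        field_simp
        linear_combination -(mul_self_sqrt hc.le)

theorem lintegral_abs_sub_mul_abs_sub_one_le [IsFiniteMeasure μ] (hF : Measurable F)
    (hF0 : ∀ x, 0 ≤ F x) (hc : 0 < c) (hbd : ∀ x, F x ≤ 1 + c * exp |x - a|)
    (hbalIic : ∫⁻ x in Iic a, ofReal (F x) ∂μ = μ (Iic a))
    (hbalIoi : ∫⁻ x in Ioi a, ofReal (F x) ∂μ = μ (Ioi a)) :
    ∫⁻ x, ofReal (|x - a| * |F x - 1|) ∂μ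
      ≤ 2 * ofReal (c + √c) * ∫⁻ x, ofReal (exp (2 * |x - a|)) ∂μ := by
  rw [← lintegral_add_compl _ measurableSet_Iic, compl_Iic, two_mul, add_mul]
  exact add_le_add
    (setLIntegral_abs_sub_mul_abs_sub_one_le measurableSet_Iic (measure_ne_top _ _) hF hF0 hc hbd
      hbalIic)
    (setLIntegral_abs_sub_mul_abs_sub_one_le measurableSet_Ioi (measure_ne_top _ _) hF hF0 hc hbd
      hbalIoi)

end WeightedEstimate

section LogConcaveDensity

variable {μ : Measure ℝ} [IsProbabilityMeasure μ] {I : Set ℝ} {g : ℝ → ℝ} {a δ : ℝ}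

theorem ConcaveOn.indicator_exp_le_of_balanced_side {κ η : ℝ} (hg : ConcaveOn ℝ I g)
    (hF : Measurable (I.indicator fun y => exp (g y))) {H J : Set ℝ} (hH : MeasurableSet H)
    (hJH : J ⊆ H) (hJ : MeasurableSet J)
    (hbal : ∫⁻ x in H, ofReal (I.indicator (fun y => exp (g y)) x) ∂μ = μ H)
    (hFH : ∀ x ∈ H, I.indicator (fun y => exp (g y)) x ≤ 1 + δ)
    (hfar : ∀ x₀ ∈ J, 1 ≤ |a - x₀|) (hseg : ∀ x₀ ∈ J, ∀ x ∉ H, a ∈ segment ℝ x₀ x)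
    (hgap : ofReal δ < ofReal κ * μ J) (hκ : 0 ≤ κ) (hga : g a ≤ η) (hδη : δ ≤ η)
    (hκη : 2 * κ ≤ η) (hη1 : 2 * η ≤ 1) :
    ∀ x, I.indicator (fun y => exp (g y)) x ≤ 1 + 2 * exp 1 * η * exp |x - a| := by
  obtain ⟨x₀, hx₀J, hFx₀⟩ := exists_mem_one_sub_lt_of_setLIntegral_eq hF
    (indicator_nonneg fun _ _ => (exp_pos _).le) hH hJH hJ hbal hFH hgap
  have hx₀I : x₀ ∈ I := by
    by_contra h
    rw [indicator_of_notMem h] at hFx₀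
    linarith
  have hgx₀ : -η ≤ g x₀ := by
    have := (exp_neg_two_mul_le_one_sub hκ (by linarith)).trans_lt hFx₀
    rw [indicator_of_mem hx₀I, exp_lt_exp] at this
    linarith
  intro x
  by_cases hx : x ∈ H
  · have hexp : 1 ≤ exp 1 * exp |x - a| := one_le_mul_of_one_le_of_one_le
      (one_le_exp zero_le_one) (one_le_exp (abs_nonneg _))
    nlinarith [hFH x hx]
  · exact hg.indicator_exp_le_of_mem_segment hx₀I (hseg x₀ hx₀J x hx) (hfar x₀ hx₀J)
      (by linarith) hη1 hga hgx₀

theorem ConcaveOn.indicator_exp_le_one_add_mul_exp {d : ℝ} (hg : ConcaveOn ℝ I g)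
    (hF : Measurable (I.indicator fun y => exp (g y)))
    (hbalIic : ∫⁻ x in Iic a, ofReal (I.indicator (fun y => exp (g y)) x) ∂μ = μ (Iic a))
    (hbalIoi : ∫⁻ x in Ioi a, ofReal (I.indicator (fun y => exp (g y)) x) ∂μ = μ (Ioi a))
    (hd : 0 < d) (hdIic : ofReal d ≤ μ (Iic (a - 1))) (hdIci : ofReal d ≤ μ (Ici (a + 1)))
    (haI : a ∈ I) (hδ : 0 < δ) (hsmall : 2 * ((1 + 4 / d) * δ) ≤ 1)
    (ha : I.indicator (fun y => exp (g y)) a ≤ 1 + δ) :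
    ∀ x, I.indicator (fun y => exp (g y)) x
      ≤ 1 + 2 * exp 1 * ((1 + 4 / d) * δ) * exp |x - a| := by
  have hδη : δ ≤ (1 + 4 / d) * δ := by nlinarith [div_pos four_pos hd]
  have hga : g a ≤ (1 + 4 / d) * δ := by
    rw [indicator_of_mem haI] at ha
    exact (exp_le_exp.1 (ha.trans (by linarith [add_one_le_exp δ]))).trans hδη
  have hκ : 0 ≤ 2 * δ / d := by positivity
  have hκη : 2 * (2 * δ / d) ≤ (1 + 4 / d) * δ := by
    linarith [show 2 * (2 * δ / d) = 4 / d * δ by ring,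
      show (1 + 4 / d) * δ = δ + 4 / d * δ by ring]
  have hgap {J : Set ℝ} (hJ : ofReal d ≤ μ J) : ofReal δ < ofReal (2 * δ / d) * μ J :=
    calc ofReal δ < ofReal (2 * δ / d * d) := by
          rw [div_mul_cancel₀ _ hd.ne']
          exact (ENNReal.ofReal_lt_ofReal_iff (by linarith)).2 (by linarith)
      _ = ofReal (2 * δ / d) * ofReal d := ENNReal.ofReal_mul (by positivity)
      _ ≤ ofReal (2 * δ / d) * μ J := by gcongr
  have hquasi (x y : ℝ) (hx : x ≤ a) (hy : a ≤ y) :=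
    hg.min_le_indicator_exp (x := x) (y := y) (z := a)
      (by rw [segment_eq_Icc (hx.trans hy)]; exact ⟨hx, hy⟩)
  rcases forall_le_or_forall_le_of_min_le hquasi ha with hIic | hIci
  · refine hg.indicator_exp_le_of_balanced_side hF measurableSet_Iic
      (Iic_subset_Iic.2 (by linarith)) measurableSet_Iic hbalIic hIic
      (fun x₀ hx₀ => ?_) (fun x₀ hx₀ x hx => ?_) (hgap hdIic) hκ hga hδη hκη hsmall
    · rw [mem_Iic] at hx₀
      rw [abs_of_nonneg (by linarith)]
      linarith
    · rw [mem_Iic, not_le] at hx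
      rw [mem_Iic] at hx₀
      rw [segment_eq_Icc (by linarith)]
      exact ⟨by linarith, hx.le⟩
  · refine hg.indicator_exp_le_of_balanced_side hF measurableSet_Ioi
      (fun x hx => (show a < x by rw [mem_Ici] at hx; linarith)) measurableSet_Ici hbalIoi
      (fun x hx => hIci x (le_of_lt hx))
      (fun x₀ hx₀ => ?_) (fun x₀ hx₀ x hx => ?_) (hgap hdIci) hκ hga hδη hκη hsmall
    · rw [mem_Ici] at hx₀
      rw [abs_of_nonpos (by linarith)]
      linarith
    · rw [mem_Ioi, not_lt] at hx
      rw [mem_Ici] at hx₀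
      rw [segment_symm, segment_eq_Icc (by linarith)]
      exact ⟨hx, by linarith⟩

end LogConcaveDensity

section Centering

variable {I : Set ℝ} {ψ : ℝ → ℝ} {a : ℝ}

theorem setLIntegral_indicator_exp_gaussPsi_sub
    (hF : Measurable (I.indicator fun y => exp (gaussPsi y - ψ y))) {s : Set ℝ}
    (hs : MeasurableSet s) :
    ∫⁻ x in s, ofReal (I.indicator (fun y => exp (gaussPsi y - ψ y)) x) ∂gauss
      = volume.withDensity (I.indicator fun x => ofReal (exp (-ψ x))) s := by
  rw [gauss, setLIntegral_withDensity_eq_setLIntegral_mul _ (by fun_prop) hF.ennreal_ofReal hs,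
    withDensity_apply _ hs]
  refine lintegral_congr fun x => ?_
  by_cases hx : x ∈ I
  · simp only [Pi.mul_apply, indicator_of_mem hx, ← ENNReal.ofReal_mul (exp_pos _).le, ← exp_add]
    ring_nf
  · simp [hx]

theorem setLIntegral_indicator_exp_gaussPsi_sub_Iic_Ioi (hI : MeasurableSet I)
    (hF : Measurable (I.indicator fun y => exp (gaussPsi y - ψ y)))
    (hprob : IsProbabilityMeasure
      (volume.withDensity (I.indicator fun x => ofReal (exp (-ψ x)))))
    (hcent : volume.withDensity (I.indicator fun x => ofReal (exp (-ψ x))) (Iic a ∩ I)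
      = gauss (Iic a)) :
    ∫⁻ x in Iic a, ofReal (I.indicator (fun y => exp (gaussPsi y - ψ y)) x) ∂gauss
        = gauss (Iic a) ∧
      ∫⁻ x in Ioi a, ofReal (I.indicator (fun y => exp (gaussPsi y - ψ y)) x) ∂gauss
        = gauss (Ioi a) := by
  set m := volume.withDensity (I.indicator fun x => ofReal (exp (-ψ x)))
  have hIic : m (Iic a) = gauss (Iic a) := by
    rw [← hcent, measure_inter_conull]
    simp [m, withDensity_apply _ hI.compl, lintegral_indicator hI, Measure.restrict_restrict hI]
  have hIoi : m (Ioi a) = gauss (Ioi a) := by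
    rw [← compl_Iic, prob_compl_eq_one_sub measurableSet_Iic,
      prob_compl_eq_one_sub measurableSet_Iic, hIic]
  rw [setLIntegral_indicator_exp_gaussPsi_sub hF measurableSet_Iic,
    setLIntegral_indicator_exp_gaussPsi_sub hF measurableSet_Ioi]
  exact ⟨hIic, hIoi⟩

theorem indicator_exp_gaussPsi_sub_le {δ : ℝ} (haI : a ∈ I)
    (hdef : exp (-ψ a) ≤ exp (-gaussPsi a) + δ) :
    I.indicator (fun y => exp (gaussPsi y - ψ y)) a ≤ 1 + exp (gaussPsi a) * δ := by
  rw [indicator_of_mem haI, sub_eq_add_neg, exp_add]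
  calc exp (gaussPsi a) * exp (-ψ a) ≤ exp (gaussPsi a) * (exp (-gaussPsi a) + δ) := by gcongr
    _ = 1 + exp (gaussPsi a) * δ := by rw [mul_add, ← exp_add, add_neg_cancel, exp_zero]

end Centering

theorem two_mul_ofReal_add_sqrt_mul_le {K δ : ℝ} {M : ℝ≥0∞} (hM : M ≠ ∞) (hK : 0 ≤ K)
    (hδ : 0 ≤ δ) (hδ1 : δ ≤ 1) :
    2 * ofReal (K * δ + √(K * δ)) * M ≤ ofReal (2 * (K + √K) * M.toReal * √δ) := by
  have hδsqrt : δ ≤ √δ := by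
    rw [Real.le_sqrt hδ hδ]
    nlinarith
  calc 2 * ofReal (K * δ + √(K * δ)) * M = ofReal (2 * (K * δ + √K * √δ) * M.toReal) := by
        rw [ENNReal.ofReal_mul (by positivity), ENNReal.ofReal_mul zero_le_two,
          ENNReal.ofReal_ofNat, ENNReal.ofReal_toReal hM, sqrt_mul hK]
    _ ≤ ofReal (2 * (K + √K) * M.toReal * √δ) := by
        refine ENNReal.ofReal_le_ofReal ?_
        have hMnn : 0 ≤ M.toReal := ENNReal.toReal_nonneg
        nlinarith [mul_le_mul_of_nonneg_left hδsqrt (mul_nonneg hK hMnn),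
          mul_nonneg (mul_nonneg (sqrt_nonneg K) (sqrt_nonneg δ)) hMnn]

theorem weighted_l1_estimate_of_center (a : ℝ) :
    ∃ C : ℝ, 0 < C ∧ ∃ δ₀ : ℝ, 0 < δ₀ ∧
      ∀ (δ : ℝ), 0 < δ → δ ≤ δ₀ →
      ∀ (I : Set ℝ) (ψ : ℝ → ℝ),
        IsOpen I → Convex ℝ I → a ∈ I →
        (∀ x ∈ I, ∀ y ∈ I, ∀ t ∈ Ioo (0:ℝ) 1,
          ψ ((1 - t) * x + t * y)
            ≤ (1 - t) * ψ x + t * ψ y - (1 / 2) * (1 - t) * t * |x - y| ^ 2) →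
        IsProbabilityMeasure
          (volume.withDensity (I.indicator fun x => ofReal (exp (-ψ x)))) →
        volume.withDensity (I.indicator fun x => ofReal (exp (-ψ x))) (Iic a ∩ I)
          = gauss (Iic a) →
        exp (-ψ a) ≤ exp (-gaussPsi a) + δ →
        (∫ x, |x - a| * |I.indicator (fun y => exp (gaussPsi y - ψ y)) x - 1| ∂gauss)
          ≤ C * √δ := by
  obtain ⟨d, hd, hdIic, hdIci⟩ := exists_pos_ofReal_le_gauss_Iic_and_Ici a
  set A := exp (gaussPsi a)
  set K := 2 * exp 1 * (1 + 4 / d) * A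
  set M := ∫⁻ x, ofReal (exp (2 * |x - a|)) ∂gauss
  have hMtop : M ≠ ∞ := (integrable_exp_two_mul_abs_sub a).lintegral_lt_top.ne
  have hM : 0 < M.toReal :=
    ENNReal.toReal_pos (one_pos.trans_le (one_le_lintegral_exp_two_mul_abs_sub a)).ne' hMtop
  refine ⟨2 * (K + √K) * M.toReal, by positivity, min 1 (1 / (2 * (1 + 4 / d) * A)),
    by positivity, fun δ hδ hδδ₀ I ψ hI hIc haI hψ hprob hcent hdef => ?_⟩
  have hg := concaveOn_gaussPsi_sub (strongConvexOn_of_forall_mem_Ioo_s5 hIc hψ)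
  have hF := hg.measurable_indicator_exp hI
  obtain ⟨hbalIic, hbalIoi⟩ :=
    setLIntegral_indicator_exp_gaussPsi_sub_Iic_Ioi hI.measurableSet hF hprob hcent
  have hsmall : 2 * ((1 + 4 / d) * (A * δ)) ≤ 1 := by
    have := (le_div_iff₀ (by positivity)).1 (hδδ₀.trans (min_le_right _ _))
    linarith
  have hbd := hg.indicator_exp_le_one_add_mul_exp hF hbalIic hbalIoi hd hdIic hdIci haI
    (by positivity) hsmall (indicator_exp_gaussPsi_sub_le haI hdef)
  rw [show 2 * exp 1 * ((1 + 4 / d) * (A * δ)) = K * δ by ring] at hbd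
  have hL := lintegral_abs_sub_mul_abs_sub_one_le hF
    (indicator_nonneg fun _ _ => (exp_pos _).le) (by positivity) hbd hbalIic hbalIoi
  rw [integral_eq_lintegral_of_nonneg_ae (ae_of_all _ fun x => by positivity) (by fun_prop)]
  exact ENNReal.toReal_le_of_le_ofReal (by positivity) (hL.trans
    (two_mul_ofReal_add_sqrt_mul_le hMtop (by positivity) hδ.le (hδδ₀.trans (min_le_left _ _))))

theorem weighted_l1_estimate_on_interval_general (θ : ℝ) :
    ∃ C : ℝ, 0 < C ∧ ∃ δ₀ : ℝ, 0 < δ₀ ∧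
      ∀ (δ : ℝ), 0 < δ → δ ≤ δ₀ →
      ∀ (I : Set ℝ) (ψ : ℝ → ℝ) (a : ℝ),
        IsOpen I → Convex ℝ I → a ∈ I →
        gauss (Iic a) = ENNReal.ofReal θ →
        (∀ x ∈ I, ∀ y ∈ I, ∀ t ∈ Ioo (0:ℝ) 1,
          ψ ((1 - t) * x + t * y)
            ≤ (1 - t) * ψ x + t * ψ y - (1 / 2) * (1 - t) * t * |x - y| ^ 2) →
        IsProbabilityMeasure
          (MeasureTheory.volume.withDensity
            (I.indicator fun x => ENNReal.ofReal (Real.exp (-ψ x)))) →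
        (MeasureTheory.volume.withDensity
            (I.indicator fun x => ENNReal.ofReal (Real.exp (-ψ x)))) (Iic a ∩ I)
          = ENNReal.ofReal θ →
        Real.exp (-ψ a) ≤ Real.exp (-gaussPsi a) + δ →
        (∫ x, |x - a| * |I.indicator (fun y => Real.exp (gaussPsi y - ψ y)) x - 1| ∂gauss)
          ≤ C * Real.sqrt δ := by
  by_cases hθ : ∃ a₀, gauss (Iic a₀) = ENNReal.ofReal θ
  · obtain ⟨a₀, ha₀⟩ := hθ
    obtain ⟨C, hC, δ₀, hδ₀, hest⟩ := weighted_l1_estimate_of_center a₀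
    refine ⟨C, hC, δ₀, hδ₀, fun δ hδ hδδ₀ I ψ a hI hIc haI hcdf hψ hprob hcent hdef => ?_⟩
    obtain rfl : a = a₀ := strictMono_gauss_Iic.injective (hcdf.trans ha₀.symm)
    exact hest δ hδ hδδ₀ I ψ hI hIc haI hψ hprob (hcent.trans hcdf.symm) hdef
  · exact ⟨1, one_pos, 1, one_pos, fun _ _ _ _ _ a _ _ _ hcdf => absurd ⟨a, hcdf⟩ hθ⟩

/-- the weighted `L¹`-estimate `∫ |x - a_θ|·|f - 1| dγ ≤ C·√δ`. -/
theorem weighted_l1_estimate_on_interval (θ : ℝ) (hθ : θ ∈ Ioo (0:ℝ) 1) :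
    ∃ C : ℝ, 0 < C ∧ ∃ δ₀ : ℝ, 0 < δ₀ ∧
      ∀ (δ : ℝ), 0 < δ → δ ≤ δ₀ →
      ∀ (I : Set ℝ) (ψ : ℝ → ℝ) (a : ℝ),
        IsOpen I → Convex ℝ I → a ∈ I →
        gauss (Iic a) = ENNReal.ofReal θ →
        (∀ x ∈ I, ∀ y ∈ I, ∀ t ∈ Ioo (0:ℝ) 1,
          ψ ((1 - t) * x + t * y)
            ≤ (1 - t) * ψ x + t * ψ y - (1 / 2) * (1 - t) * t * |x - y| ^ 2) →
        IsProbabilityMeasure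
          (MeasureTheory.volume.withDensity
            (I.indicator fun x => ENNReal.ofReal (Real.exp (-ψ x)))) →
        (MeasureTheory.volume.withDensity
            (I.indicator fun x => ENNReal.ofReal (Real.exp (-ψ x)))) (Iic a ∩ I)
          = ENNReal.ofReal θ →
        Real.exp (-ψ a) ≤ Real.exp (-gaussPsi a) + δ →
        (∫ x, |x - a| * |I.indicator (fun y => Real.exp (gaussPsi y - ψ y)) x - 1| ∂gauss)
          ≤ C * Real.sqrt δ :=
  weighted_l1_estimate_on_interval_general θ
end
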